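/- Let P be a positive opetope arising by switching γ and δ on 1-dimensional faces from a positive opetope P; then P^{op} is a positive opetope. -/

import Mathlib

open scoped Classical

structure PHg where
  Face : ℕ → Type
  fin : ∀ k, Finite (Face k)
  γ : ∀ k, Face (k+1) → Face k
  δ : ∀ k, Face (k+1) → Face k → Prop
  δ_total : ∀ k a, ∃ x, δ k a x
  δ0_fun : ∀ (a : Face 1) (x y : Face 0), δ 0 a x → δ 0 a y → x = y
  bounded : ∃ n, ∀ k, n < k → IsEmpty (Face k)

abbrev PHg.FaceS (S : PHg) : Type := Σ k, S.Face k

/-- The codomain operation, viewed on faces of arbitrary dimension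
(identity in dimension 0). -/
def gammaS (S : PHg) : S.FaceS → S.FaceS
  | ⟨0, x⟩ => ⟨0, x⟩
  | ⟨k+1, x⟩ => ⟨k, S.γ k x⟩

/-- `x ∈ δ(q)`. -/
def inDelta (S : PHg) (x q : S.FaceS) : Prop :=
  match q with
  | ⟨0, _⟩ => False
  | ⟨k+1, a⟩ => ∃ h : x.1 = k, S.δ k a (h ▸ x.2)

/-- `x = γ(q)` (for `q` of positive dimension). -/
def inGammaS (S : PHg) (x q : S.FaceS) : Prop := 0 < q.1 ∧ gammaS S q = x

/-- `x ∈ ∂(q) = {γ(q)} ∪ δ(q)`. -/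
def inBoundary (S : PHg) (x q : S.FaceS) : Prop := inGammaS S x q ∨ inDelta S x q

def covPlus (S : PHg) (a b : S.FaceS) : Prop :=
  ∃ α, inDelta S a α ∧ gammaS S α = b

/-- The upper order `<⁺`. -/
def ltPlus (S : PHg) : S.FaceS → S.FaceS → Prop := Relation.TransGen (covPlus S)

def lePlus (S : PHg) (a b : S.FaceS) : Prop := a = b ∨ ltPlus S a b

def perpPlus (S : PHg) (a b : S.FaceS) : Prop := ltPlus S a b ∨ ltPlus S b a

def covMinus (S : PHg) (a b : S.FaceS) : Prop := 0 < a.1 ∧ inDelta S (gammaS S a) b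

/-- The lower order `<⁻`. -/
def ltMinus (S : PHg) : S.FaceS → S.FaceS → Prop := Relation.TransGen (covMinus S)

def perpMinus (S : PHg) (a b : S.FaceS) : Prop := ltMinus S a b ∨ ltMinus S b a

/-- Iterated codomain `γ^{(k)}`. -/
def gammaIter (S : PHg) (k : ℕ) (p : S.FaceS) : S.FaceS := (gammaS S)^[p.1 - k] p

/-- `X` is a `<⁺`-interval. -/
def IntervalPlus (S : PHg) (X : Set S.FaceS) : Prop :=
  X = ∅ ∨ ∃ x0 x1, lePlus S x0 x1 ∧ X = {x | lePlus S x0 x ∧ lePlus S x x1}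

def hasDim (S : PHg) (n : ℕ) : Prop :=
  Nonempty (S.Face n) ∧ ∀ k, n < k → IsEmpty (S.Face k)

/-- A positive opetope: a nonempty positive hypergraph satisfying globularity,
strictness, disjointness, pencil linearity, and having at most one face outside
`δ(S_{k+1})` in each dimension. -/
structure IsOpetope (S : PHg) : Prop where
  ne : Nonempty (S.Face 0)
  glob_gamma : ∀ a : S.FaceS, 2 ≤ a.1 →
    ({gammaS S (gammaS S a)} : Set S.FaceS) =
      {x | ∃ y, inDelta S y a ∧ gammaS S y = x} \ {x | ∃ y, inDelta S y a ∧ inDelta S x y}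
  glob_delta : ∀ a : S.FaceS, 2 ≤ a.1 →
    {x | inDelta S x (gammaS S a)} =
      {x | ∃ y, inDelta S y a ∧ inDelta S x y} \ {x | ∃ y, inDelta S y a ∧ gammaS S y = x}
  strict : ∀ a, ¬ ltPlus S a a
  linear0 : ∀ a b : S.FaceS, a.1 = 0 → b.1 = 0 → a = b ∨ perpPlus S a b
  disj : ∀ a b : S.FaceS, 0 < a.1 → ¬ (perpMinus S a b ∧ perpPlus S a b)
  pencil_gamma : ∀ x a b, inGammaS S x a → inGammaS S x b → a = b ∨ perpPlus S a b
  pencil_delta : ∀ x a b, inDelta S x a → inDelta S x b → a = b ∨ perpPlus S a b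
  size_le_one : ∀ k (a b : S.Face k),
    (¬ ∃ α : S.Face (k+1), S.δ k α a) → (¬ ∃ α : S.Face (k+1), S.δ k α b) → a = b
/-- The dual positive hypergraph: `γ` and `δ` interchanged on faces of dimension 1. -/
noncomputable def PHg.dual (S : PHg) : PHg where
  Face := S.Face
  fin := S.fin
  γ := fun k => match k with
    | 0 => fun a => Classical.choose (S.δ_total 0 a)
    | k+1 => S.γ (k+1)
  δ := fun k => match k with
    | 0 => fun a x => S.γ 0 a = x
    | k+1 => S.δ (k+1)
  δ_total := fun k => match k with
    | 0 => fun a => ⟨S.γ 0 a, rfl⟩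
    | k+1 => fun a => S.δ_total (k+1) a
  δ0_fun := fun _ _ _ hx hy => hx.symm.trans hy
  bounded := S.bounded

/-!
Dualising changes nothing above dimension 1, so every axiom that only involves faces of
dimension at least 2 transfers verbatim. On the remaining faces the swap of `γ` and `δ` on
1-faces reverses `<⁺` on 0-faces and `<⁻` on 1-faces, which leaves the symmetric relations
`⊥⁺`, `⊥⁻` unchanged; it exchanges the two globularity laws at 2-faces and the two pencil
laws at 0-faces. The one new fact is that the dual has at most one 0-face outside
`γ(S₁)`: such a face is `<⁺`-minimal, and `<⁺` is linear on `S₀`.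
-/

namespace Relation

variable {α : Type*} {r s : α → α → Prop} {p : α → Prop} {a b : α}

theorem TransGen.of_invariant (hp : ∀ a b, r a b → p a → p b)
    (hrs : ∀ a b, p a → r a b → s a b) (h : TransGen r a b) (ha : p a) : TransGen s a b := by
  induction h using TransGen.head_induction_on with
  | single h => exact .single (hrs _ _ ha h)
  | head hac _ ih => exact .head (hrs _ _ ha hac) (ih (hp _ _ hac ha))

theorem transGen_congr_of_invariant (hp : ∀ a b, r a b → p a → p b)
    (hrs : ∀ a b, p a → (r a b ↔ s a b)) (ha : p a) : TransGen r a b ↔ TransGen s a b :=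
  ⟨fun h => h.of_invariant hp (fun a b ha => (hrs a b ha).1) ha,
    fun h => h.of_invariant (fun a b hab ha => hp a b ((hrs a b ha).2 hab) ha)
      (fun a b ha => (hrs a b ha).2) ha⟩

end Relation

namespace PHg

variable (S : PHg) {x q a b : S.FaceS}

theorem inDelta_succ_iff {k : ℕ} (α : S.Face (k+1)) :
    inDelta S x ⟨k+1, α⟩ ↔ ∃ v, S.δ k α v ∧ x = ⟨k, v⟩ := by
  constructor
  · obtain ⟨m, u⟩ := x
    rintro ⟨rfl, hv⟩
    exact ⟨u, hv, rfl⟩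
  · rintro ⟨v, hv, rfl⟩
    exact ⟨rfl, hv⟩

variable {S}

theorem dim_of_inDelta (h : inDelta S x q) : q.1 = x.1 + 1 := by
  obtain ⟨_ | k, α⟩ := q
  · exact h.elim
  · obtain ⟨v, -, rfl⟩ := (inDelta_succ_iff S α).1 h
    rfl

theorem dim_gammaS (q : S.FaceS) : (gammaS S q).1 = q.1 - 1 := by
  obtain ⟨_ | k, α⟩ := q <;> rfl

theorem dim_of_inGammaS (h : inGammaS S x q) : q.1 = x.1 + 1 := by
  have := dim_gammaS q
  rw [h.2] at this
  have := h.1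
  omega

theorem dim_of_covPlus (h : covPlus S a b) : a.1 = b.1 := by
  obtain ⟨α, hα, rfl⟩ := h
  have := dim_of_inDelta hα
  rw [dim_gammaS]
  omega

theorem dim_of_ltPlus (h : ltPlus S a b) : a.1 = b.1 :=
  Relation.TransGen.trans_induction_on h dim_of_covPlus fun _ _ => Eq.trans

theorem dim_of_perpPlus (h : perpPlus S a b) : a.1 = b.1 :=
  h.elim dim_of_ltPlus fun h => (dim_of_ltPlus h).symm

theorem dim_of_covMinus (h : covMinus S a b) : a.1 = b.1 := by
  have := dim_of_inDelta h.2
  have := h.1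
  rw [dim_gammaS] at *
  omega

theorem dim_of_ltMinus (h : ltMinus S a b) : a.1 = b.1 :=
  Relation.TransGen.trans_induction_on h dim_of_covMinus fun _ _ => Eq.trans

theorem dim_of_perpMinus (h : perpMinus S a b) : a.1 = b.1 :=
  h.elim dim_of_ltMinus fun h => (dim_of_ltMinus h).symm

theorem exists_gamma_eq_of_ltPlus {k : ℕ} {c : S.Face k} (h : ltPlus S a ⟨k, c⟩) :
    ∃ α : S.Face (k+1), S.γ k α = c := by
  obtain ⟨_, -, α, hα, hγ⟩ := Relation.TransGen.tail'_iff.1 h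
  obtain ⟨_ | m, α⟩ := α
  · exact hα.elim
  · obtain ⟨rfl, hc⟩ := Sigma.mk.inj_iff.1 hγ
    exact ⟨α, eq_of_heq hc⟩

def gammaDelta (S : PHg) (a : S.FaceS) : Set S.FaceS :=
  {x | ∃ y, inDelta S y a ∧ gammaS S y = x}

def deltaDelta (S : PHg) (a : S.FaceS) : Set S.FaceS :=
  {x | ∃ y, inDelta S y a ∧ inDelta S x y}

/- `S.dual.FaceS` agrees with `S.FaceS` only after unfolding `PHg.dual`, which `rw` does not do:
bound variables below are ascribed the type `S.FaceS`, and a rewrite may leave a goal that is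
closed by `Iff.rfl` but not syntactically by `rfl`. -/
theorem inDelta_dual_iff_of_dim_ne_one (h : q.1 ≠ 1) : inDelta S.dual x q ↔ inDelta S x q := by
  obtain ⟨_ | _ | k, α⟩ := q
  · exact Iff.rfl
  · exact absurd rfl h
  · exact Iff.rfl

theorem gammaS_dual_of_dim_ne_one (h : q.1 ≠ 1) : gammaS S.dual q = gammaS S q := by
  obtain ⟨_ | _ | k, α⟩ := q
  · rfl
  · exact absurd rfl h
  · rfl

theorem inDelta_dual_iff_of_dim_eq_one (h : q.1 = 1) : inDelta S.dual x q ↔ gammaS S q = x := by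
  obtain ⟨m, α⟩ := q
  obtain rfl : m = 1 := h
  refine (inDelta_succ_iff S.dual (x := x) α).trans ⟨?_, ?_⟩
  · rintro ⟨v, rfl, rfl⟩
    rfl
  · rintro rfl
    exact ⟨_, rfl, rfl⟩

theorem gammaS_dual_eq_iff_of_dim_eq_one (h : q.1 = 1) : gammaS S.dual q = x ↔ inDelta S x q := by
  obtain ⟨m, α⟩ := q
  obtain rfl : m = 1 := h
  have hδ := Classical.choose_spec (S.δ_total 0 α)
  rw [inDelta_succ_iff]
  constructor
  · rintro rfl
    exact ⟨_, hδ, rfl⟩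
  · rintro ⟨v, hv, rfl⟩
    show (⟨0, Classical.choose (S.δ_total 0 α)⟩ : S.FaceS) = ⟨0, v⟩
    rw [S.δ0_fun α _ v hδ hv]

theorem inGammaS_dual_iff_of_dim_ne_one (h : q.1 ≠ 1) : inGammaS S.dual x q ↔ inGammaS S x q :=
  and_congr_right' (by rw [gammaS_dual_of_dim_ne_one h]; exact Iff.rfl)

theorem inGammaS_dual_iff_of_dim_eq_one (h : q.1 = 1) : inGammaS S.dual x q ↔ inDelta S x q :=
  (and_iff_right (by omega)).trans (gammaS_dual_eq_iff_of_dim_eq_one h)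

theorem inDelta_dual_iff_inGammaS_of_dim_eq_one (h : q.1 = 1) :
    inDelta S.dual x q ↔ inGammaS S x q :=
  (inDelta_dual_iff_of_dim_eq_one h).trans (and_iff_right (by omega)).symm

theorem gammaDelta_dual_of_dim_eq_two (ha : a.1 = 2) : gammaDelta S.dual a = deltaDelta S a :=
  Set.ext fun (x : S.FaceS) => exists_congr fun (y : S.FaceS) => by
    rw [inDelta_dual_iff_of_dim_ne_one (by omega)]
    refine and_congr_right fun hy => gammaS_dual_eq_iff_of_dim_eq_one ?_
    have := dim_of_inDelta hy
    omega

theorem deltaDelta_dual_of_dim_eq_two (ha : a.1 = 2) : deltaDelta S.dual a = gammaDelta S a :=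
  Set.ext fun (x : S.FaceS) => exists_congr fun (y : S.FaceS) => by
    rw [inDelta_dual_iff_of_dim_ne_one (by omega)]
    refine and_congr_right fun hy => inDelta_dual_iff_of_dim_eq_one ?_
    have := dim_of_inDelta hy
    omega

theorem gammaDelta_dual_of_three_le_dim (ha : 3 ≤ a.1) : gammaDelta S.dual a = gammaDelta S a :=
  Set.ext fun (x : S.FaceS) => exists_congr fun (y : S.FaceS) => by
    rw [inDelta_dual_iff_of_dim_ne_one (by omega)]
    refine and_congr_right fun hy => ?_
    have := dim_of_inDelta hy
    rw [gammaS_dual_of_dim_ne_one (by omega)]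
    exact Iff.rfl

theorem deltaDelta_dual_of_three_le_dim (ha : 3 ≤ a.1) : deltaDelta S.dual a = deltaDelta S a :=
  Set.ext fun (x : S.FaceS) => exists_congr fun (y : S.FaceS) => by
    rw [inDelta_dual_iff_of_dim_ne_one (by omega)]
    refine and_congr_right fun hy => inDelta_dual_iff_of_dim_ne_one ?_
    have := dim_of_inDelta hy
    omega

theorem covPlus_dual_iff_of_dim_pos (ha : 0 < a.1) : covPlus S.dual a b ↔ covPlus S a b :=
  exists_congr fun (α : S.FaceS) => by
    by_cases hα : α.1 = 1
    · refine iff_of_false (fun h => ?_) (fun h => ?_) <;>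
      · have := dim_of_inDelta h.1
        omega
    · rw [inDelta_dual_iff_of_dim_ne_one hα, gammaS_dual_of_dim_ne_one hα]
      exact Iff.rfl

theorem covPlus_dual_iff_of_dim_eq_zero (ha : a.1 = 0) : covPlus S.dual a b ↔ covPlus S b a :=
  exists_congr fun (α : S.FaceS) => by
    by_cases hα : α.1 = 1
    · rw [inDelta_dual_iff_of_dim_eq_one hα, gammaS_dual_eq_iff_of_dim_eq_one hα, and_comm]
    · refine iff_of_false (fun h => ?_) (fun h => ?_)
      · have := dim_of_inDelta h.1
        omega
      · have := dim_of_inDelta h.1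
        have := dim_gammaS α
        rw [h.2] at this
        omega

theorem ltPlus_dual_iff_of_dim_pos (ha : 0 < a.1) : ltPlus S.dual a b ↔ ltPlus S a b :=
  Relation.transGen_congr_of_invariant (α := S.FaceS) (p := fun a => 0 < a.1)
    (fun _ _ h ha => dim_of_covPlus (S := S.dual) h ▸ ha)
    (fun _ _ => covPlus_dual_iff_of_dim_pos) ha

theorem ltPlus_dual_iff_of_dim_eq_zero (ha : a.1 = 0) : ltPlus S.dual a b ↔ ltPlus S b a :=
  (Relation.transGen_congr_of_invariant (α := S.FaceS) (s := Function.swap (covPlus S))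
    (p := fun a => a.1 = 0) (fun _ _ h ha => dim_of_covPlus (S := S.dual) h ▸ ha)
    (fun _ _ => covPlus_dual_iff_of_dim_eq_zero) ha).trans Relation.transGen_swap

theorem perpPlus_dual_iff : perpPlus S.dual a b ↔ perpPlus S a b := by
  by_cases hab : a.1 = b.1
  · rcases Nat.eq_zero_or_pos a.1 with ha | ha
    · exact (or_congr (ltPlus_dual_iff_of_dim_eq_zero ha)
        (ltPlus_dual_iff_of_dim_eq_zero (hab ▸ ha))).trans or_comm
    · exact or_congr (ltPlus_dual_iff_of_dim_pos ha) (ltPlus_dual_iff_of_dim_pos (hab ▸ ha))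
  · exact iff_of_false (fun h => hab (dim_of_perpPlus (S := S.dual) h))
      (fun h => hab (dim_of_perpPlus h))

theorem covMinus_dual_iff_of_dim_eq_one (ha : a.1 = 1) :
    covMinus S.dual a b ↔ covMinus S b a := by
  by_cases hb : b.1 = 1
  · exact and_congr (by omega) ((inDelta_dual_iff_of_dim_eq_one hb).trans
      (eq_comm.trans (gammaS_dual_eq_iff_of_dim_eq_one ha)))
  · exact iff_of_false (fun h => hb (dim_of_covMinus (S := S.dual) h ▸ ha))
      (fun h => hb (dim_of_covMinus h ▸ ha))

theorem covMinus_dual_iff_of_two_le_dim (ha : 2 ≤ a.1) :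
    covMinus S.dual a b ↔ covMinus S a b := by
  by_cases hb : b.1 = 1
  · exact iff_of_false (fun h => by have := dim_of_covMinus (S := S.dual) h; omega)
      (fun h => by have := dim_of_covMinus h; omega)
  · refine and_congr Iff.rfl ?_
    rw [gammaS_dual_of_dim_ne_one (by omega)]
    exact inDelta_dual_iff_of_dim_ne_one hb

theorem ltMinus_dual_iff_of_dim_eq_one (ha : a.1 = 1) : ltMinus S.dual a b ↔ ltMinus S b a :=
  (Relation.transGen_congr_of_invariant (α := S.FaceS) (s := Function.swap (covMinus S))
    (p := fun a => a.1 = 1) (fun _ _ h ha => dim_of_covMinus (S := S.dual) h ▸ ha)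
    (fun _ _ => covMinus_dual_iff_of_dim_eq_one) ha).trans Relation.transGen_swap

theorem ltMinus_dual_iff_of_two_le_dim (ha : 2 ≤ a.1) : ltMinus S.dual a b ↔ ltMinus S a b :=
  Relation.transGen_congr_of_invariant (α := S.FaceS) (p := fun a => 2 ≤ a.1)
    (fun _ _ h ha => dim_of_covMinus (S := S.dual) h ▸ ha)
    (fun _ _ => covMinus_dual_iff_of_two_le_dim) ha

theorem perpMinus_dual_iff (ha : 0 < a.1) : perpMinus S.dual a b ↔ perpMinus S a b := by
  by_cases hab : a.1 = b.1
  · rcases (Nat.succ_le_of_lt ha).eq_or_lt with ha | ha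
    · exact (or_congr (ltMinus_dual_iff_of_dim_eq_one ha.symm)
        (ltMinus_dual_iff_of_dim_eq_one (hab ▸ ha.symm))).trans or_comm
    · exact or_congr (ltMinus_dual_iff_of_two_le_dim ha)
        (ltMinus_dual_iff_of_two_le_dim (hab ▸ ha))
  · exact iff_of_false (fun h => hab (dim_of_perpMinus (S := S.dual) h))
      (fun h => hab (dim_of_perpMinus h))

theorem singleton_gammaS_dual_of_dim_eq_one (h : q.1 = 1) :
    ({gammaS S.dual q} : Set S.FaceS) = {x | inDelta S x q} :=
  Set.ext fun _ => eq_comm.trans (gammaS_dual_eq_iff_of_dim_eq_one h)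

theorem setOf_inDelta_dual_of_dim_eq_one (h : q.1 = 1) :
    {x : S.FaceS | inDelta S.dual x q} = {gammaS S q} :=
  Set.ext fun _ => (inDelta_dual_iff_of_dim_eq_one h).trans eq_comm

theorem setOf_inDelta_dual_of_dim_ne_one (h : q.1 ≠ 1) :
    {x : S.FaceS | inDelta S.dual x q} = {x | inDelta S x q} :=
  Set.ext fun _ => inDelta_dual_iff_of_dim_ne_one h

end PHg

namespace IsOpetope

open PHg

variable {S : PHg}

theorem dual_glob_gamma (hS : IsOpetope S) (a : S.FaceS) (ha : 2 ≤ a.1) :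
    ({gammaS S.dual (gammaS S.dual a)} : Set S.FaceS) =
      gammaDelta S.dual a \ deltaDelta S.dual a := by
  rw [gammaS_dual_of_dim_ne_one (by omega)]
  have hγa := dim_gammaS a
  rcases ha.eq_or_lt with h2 | h3
  · rw [gammaDelta_dual_of_dim_eq_two h2.symm, deltaDelta_dual_of_dim_eq_two h2.symm,
      singleton_gammaS_dual_of_dim_eq_one (by omega)]
    exact hS.glob_delta a ha
  · rw [gammaDelta_dual_of_three_le_dim h3, deltaDelta_dual_of_three_le_dim h3,
      gammaS_dual_of_dim_ne_one (by omega)]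
    exact hS.glob_gamma a ha

theorem dual_glob_delta (hS : IsOpetope S) (a : S.FaceS) (ha : 2 ≤ a.1) :
    {x : S.FaceS | inDelta S.dual x (gammaS S.dual a)} =
      deltaDelta S.dual a \ gammaDelta S.dual a := by
  rw [gammaS_dual_of_dim_ne_one (by omega)]
  have hγa := dim_gammaS a
  rcases ha.eq_or_lt with h2 | h3
  · rw [gammaDelta_dual_of_dim_eq_two h2.symm, deltaDelta_dual_of_dim_eq_two h2.symm,
      setOf_inDelta_dual_of_dim_eq_one (by omega)]
    exact hS.glob_gamma a ha
  · rw [gammaDelta_dual_of_three_le_dim h3, deltaDelta_dual_of_three_le_dim h3,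
      setOf_inDelta_dual_of_dim_ne_one (by omega)]
    exact hS.glob_delta a ha

theorem dual_pencil_gamma (hS : IsOpetope S) (x a b : S.FaceS) (ha : inGammaS S.dual x a)
    (hb : inGammaS S.dual x b) : a = b ∨ perpPlus S.dual a b := by
  rw [perpPlus_dual_iff]
  have hab : a.1 = b.1 :=
    (dim_of_inGammaS (S := S.dual) ha).trans (dim_of_inGammaS (S := S.dual) hb).symm
  by_cases h1 : a.1 = 1
  · exact hS.pencil_delta x a b ((inGammaS_dual_iff_of_dim_eq_one h1).1 ha)
      ((inGammaS_dual_iff_of_dim_eq_one (hab ▸ h1)).1 hb)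
  · exact hS.pencil_gamma x a b ((inGammaS_dual_iff_of_dim_ne_one h1).1 ha)
      ((inGammaS_dual_iff_of_dim_ne_one (hab ▸ h1)).1 hb)

theorem dual_pencil_delta (hS : IsOpetope S) (x a b : S.FaceS) (ha : inDelta S.dual x a)
    (hb : inDelta S.dual x b) : a = b ∨ perpPlus S.dual a b := by
  rw [perpPlus_dual_iff]
  have hab : a.1 = b.1 :=
    (dim_of_inDelta (S := S.dual) ha).trans (dim_of_inDelta (S := S.dual) hb).symm
  by_cases h1 : a.1 = 1
  · exact hS.pencil_gamma x a b ((inDelta_dual_iff_inGammaS_of_dim_eq_one h1).1 ha)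
      ((inDelta_dual_iff_inGammaS_of_dim_eq_one (hab ▸ h1)).1 hb)
  · exact hS.pencil_delta x a b ((inDelta_dual_iff_of_dim_ne_one h1).1 ha)
      ((inDelta_dual_iff_of_dim_ne_one (hab ▸ h1)).1 hb)

theorem eq_of_notMem_range_gamma_zero (hS : IsOpetope S) {a b : S.Face 0}
    (ha : a ∉ Set.range (S.γ 0)) (hb : b ∉ Set.range (S.γ 0)) : a = b := by
  rcases hS.linear0 ⟨0, a⟩ ⟨0, b⟩ rfl rfl with h | h | h
  · exact sigma_mk_injective h
  · exact (hb (exists_gamma_eq_of_ltPlus h)).elim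
  · exact (ha (exists_gamma_eq_of_ltPlus h)).elim

end IsOpetope

/-- The dual `P^op` of a positive opetope (obtained by switching
`γ` and `δ` on 1-dimensional faces) is again a positive opetope. -/
theorem dual_is_opetope (S : PHg) (hS : IsOpetope S) : IsOpetope S.dual := by
  refine
    { ne := hS.ne
      glob_gamma := hS.dual_glob_gamma
      glob_delta := hS.dual_glob_delta
      strict := fun a h => hS.strict a ((PHg.perpPlus_dual_iff.1 (Or.inl h)).elim id id)
      linear0 := fun a b ha hb => (hS.linear0 a b ha hb).imp_right PHg.perpPlus_dual_iff.2
      disj := fun a b ha h =>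
        hS.disj a b ha (h.imp (PHg.perpMinus_dual_iff (S := S) ha).1 PHg.perpPlus_dual_iff.1)
      pencil_gamma := hS.dual_pencil_gamma
      pencil_delta := hS.dual_pencil_delta
      size_le_one := ?_ }
  rintro (_ | k) a b ha hb
  · exact hS.eq_of_notMem_range_gamma_zero ha hb
  · exact hS.size_le_one (k+1) a b ha hb
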